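/- The set of points of [0, 1/2] at which Ψ is discontinuous is countable; in particular, Ψ is bounded on [0, 1/2] and is integrable on the interval [0, 1/2] (with respect to Lebesgue measure, and Riemann integrable). -/

import Mathlib

/-! Both `T` and `I` are continuous away from `{1/n : n ∈ ℤ} ∪ {0}`, where `{1/x}` jumps, and
`I` has countable fibres, so every partial sum of the series is continuous off the countable set
of points some iterate `I^k` sends into `1/ℤ`. On `[0, 1/2]` all iterates stay in `[0, 1/2]`,
where `0 ≤ T ≤ 2/3`, so the `j`-th term is at most `(2/3)^j / 3`; the series converges uniformly,
`0 ≤ Ψ ≤ 3`, and `Ψ` is continuous off that countable (hence null) set, which makes it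
integrable. -/

/-- `T(x) = x·(1 + {1/x})` for `x ≠ 0`, `T(0) = 0`. -/
noncomputable def Tmap (x : ℝ) : ℝ := if x = 0 then 0 else x * (1 + Int.fract (1 / x))

/-- `I(x) = {1/x} / (1 + {1/x})` for `x ≠ 0`, `I(0) = 0`. -/
noncomputable def Imap (x : ℝ) : ℝ :=
  if x = 0 then 0 else Int.fract (1 / x) / (1 + Int.fract (1 / x))

/-- `Ψ(x) = 2x + 2·Σ_{j ≥ 1} T(x)·T(I(x))·⋯·T(I^{j-1}(x))·I^{j}(x)`. -/
noncomputable def Psi (x : ℝ) : ℝ :=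
  2 * x + 2 * ∑' j : ℕ, (∏ i ∈ Finset.range (j + 1), Tmap (Imap^[i] x)) * Imap^[j + 1] x

open Set MeasureTheory

theorem continuousWithinAt_tsum {α β F : Type*} [TopologicalSpace β] [NormedAddCommGroup F]
    [CompleteSpace F] {f : α → β → F} {u : α → ℝ} {s : Set β} {x : β} (hx : x ∈ s)
    (hf : ∀ i, ContinuousWithinAt (f i) s x) (hu : Summable u)
    (hfu : ∀ i, ∀ y ∈ s, ‖f i y‖ ≤ u i) :
    ContinuousWithinAt (fun y => ∑' i, f i y) s x := by
  refine continuousWithinAt_of_locally_uniform_approx_of_continuousWithinAt hx fun V hV => ?_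
  obtain ⟨t, ht⟩ := (tendstoUniformlyOn_tsum hu hfu V hV).exists
  exact ⟨s, self_mem_nhdsWithin, fun y => ∑ i ∈ t, f i y,
    tendsto_finsetSum t fun i _ => hf i, ht⟩

theorem Set.Countable.preimage_of_countable_fibers {α β : Type*} {f : α → β} {s : Set β}
    (hs : s.Countable) (hf : ∀ b ∈ s, (f ⁻¹' {b}).Countable) : (f ⁻¹' s).Countable :=
  biUnion_preimage_singleton f s ▸ hs.biUnion hf

theorem integrableOn_of_bounded_of_continuousWithinAt_off_countable {α E : Type*}
    [TopologicalSpace α] [MeasurableSpace α] [OpensMeasurableSpace α]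
    [MeasurableSingletonClass α] [NormedAddCommGroup E] [SecondCountableTopologyEither α E]
    {μ : Measure α} [NullSingletonClass μ] {f : α → E} {s B : Set α} (hs : MeasurableSet s)
    (hμs : μ s ≠ ⊤) (hB : B.Countable) (hf : ∀ x ∈ s \ B, ContinuousWithinAt f s x) {M : ℝ}
    (hM : ∀ x ∈ s, ‖f x‖ ≤ M) : IntegrableOn f s μ := by
  have hcont : ContinuousOn f (s \ B) := fun x hx => (hf x hx).mono sdiff_subset
  have hmeas : AEStronglyMeasurable f (μ.restrict s) := by
    rw [← Measure.restrict_congr_set (sdiff_null_ae_eq_self (hB.measure_zero μ))]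
    exact hcont.aestronglyMeasurable (hs.diff hB.measurableSet)
  exact ⟨hmeas, .restrict_of_bounded M hμs.lt_top ((ae_restrict_iff' hs).2 (ae_of_all _ hM))⟩

lemma Imap_nonneg (x : ℝ) : 0 ≤ Imap x := by
  unfold Imap
  split_ifs
  · rfl
  · have := Int.fract_nonneg (1 / x)
    positivity

lemma Imap_lt_half (x : ℝ) : Imap x < 1 / 2 := by
  unfold Imap
  split_ifs
  · norm_num
  · have h₀ := Int.fract_nonneg (1 / x)
    have h₁ := Int.fract_lt_one (1 / x)
    rw [div_lt_iff₀ (by linarith)]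
    linarith

lemma Imap_iterate_mem_Icc {x : ℝ} (hx : x ∈ Icc (0 : ℝ) (1 / 2)) (k : ℕ) :
    Imap^[k] x ∈ Icc (0 : ℝ) (1 / 2) := by
  induction k with
  | zero => exact hx
  | succ k _ =>
    rw [Function.iterate_succ_apply']
    exact ⟨Imap_nonneg _, (Imap_lt_half _).le⟩

lemma Tmap_nonneg {x : ℝ} (hx : 0 ≤ x) : 0 ≤ Tmap x := by
  unfold Tmap
  split_ifs
  · rfl
  · have := Int.fract_nonneg (1 / x)
    positivity

lemma Tmap_le_two_thirds {x : ℝ} (hx : x ∈ Icc (0 : ℝ) (1 / 2)) : Tmap x ≤ 2 / 3 := by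
  unfold Tmap
  split_ifs with hx0
  · norm_num
  have hxpos : 0 < x := lt_of_le_of_ne hx.1 (Ne.symm hx0)
  set n : ℤ := ⌊1 / x⌋
  have hT : x * (1 + Int.fract (1 / x)) = 1 + x - n * x := by
    rw [Int.fract, mul_add, mul_sub, mul_one_div_cancel hx0]
    ring
  have hn : (2 : ℝ) ≤ n := by
    have : (2 : ℝ) ≤ 1 / x := by rw [le_div_iff₀ hxpos]; linarith [hx.2]
    exact_mod_cast Int.le_floor.2 (by exact_mod_cast this)
  have hlt : 1 < (n + 1) * x := by
    have := (div_lt_iff₀ hxpos).1 (Int.lt_floor_add_one (1 / x))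
    linarith
  -- `3 (n - 1) x - 1 > 3 (n - 1) x - (n + 1) x = 2 (n - 2) x ≥ 0`
  rw [hT]
  nlinarith [mul_nonneg (sub_nonneg.2 hn) hxpos.le]

noncomputable def psiTerm (x : ℝ) (j : ℕ) : ℝ :=
  (∏ i ∈ Finset.range (j + 1), Tmap (Imap^[i] x)) * Imap^[j + 1] x

lemma Psi_eq (x : ℝ) : Psi x = 2 * x + 2 * ∑' j, psiTerm x j := rfl

lemma psiTerm_nonneg {x : ℝ} (hx : x ∈ Icc (0 : ℝ) (1 / 2)) (j : ℕ) : 0 ≤ psiTerm x j :=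
  mul_nonneg (Finset.prod_nonneg fun i _ => Tmap_nonneg (Imap_iterate_mem_Icc hx i).1)
    (Imap_iterate_mem_Icc hx (j + 1)).1

lemma psiTerm_le {x : ℝ} (hx : x ∈ Icc (0 : ℝ) (1 / 2)) (j : ℕ) :
    psiTerm x j ≤ (2 / 3) ^ j / 3 := by
  have hprod : ∏ i ∈ Finset.range (j + 1), Tmap (Imap^[i] x) ≤ (2 / 3) ^ (j + 1) := by
    calc ∏ i ∈ Finset.range (j + 1), Tmap (Imap^[i] x)
        ≤ ∏ _i ∈ Finset.range (j + 1), (2 / 3 : ℝ) :=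
          Finset.prod_le_prod (fun i _ => Tmap_nonneg (Imap_iterate_mem_Icc hx i).1)
            fun i _ => Tmap_le_two_thirds (Imap_iterate_mem_Icc hx i)
      _ = (2 / 3) ^ (j + 1) := by rw [Finset.prod_const, Finset.card_range]
  calc psiTerm x j ≤ (2 / 3) ^ (j + 1) * (1 / 2) :=
        mul_le_mul hprod (Imap_iterate_mem_Icc hx (j + 1)).2 (Imap_iterate_mem_Icc hx (j + 1)).1
          (by positivity)
    _ = (2 / 3) ^ j / 3 := by ring

lemma summable_geometric_two_thirds_div_three : Summable fun j : ℕ => (2 / 3 : ℝ) ^ j / 3 :=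
  (summable_geometric_of_lt_one (by norm_num) (by norm_num)).div_const 3

lemma tsum_geometric_two_thirds_div_three : ∑' j : ℕ, (2 / 3 : ℝ) ^ j / 3 = 1 := by
  rw [tsum_div_const, tsum_geometric_of_lt_one (by norm_num) (by norm_num)]
  norm_num

lemma abs_Psi_le_three {x : ℝ} (hx : x ∈ Icc (0 : ℝ) (1 / 2)) : |Psi x| ≤ 3 := by
  have hsum : Summable (psiTerm x) :=
    summable_geometric_two_thirds_div_three.of_nonneg_of_le (psiTerm_nonneg hx) (psiTerm_le hx)
  have hle : ∑' j, psiTerm x j ≤ 1 :=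
    tsum_geometric_two_thirds_div_three ▸
      hsum.tsum_le_tsum (psiTerm_le hx) summable_geometric_two_thirds_div_three
  have hge : 0 ≤ ∑' j, psiTerm x j := tsum_nonneg (psiTerm_nonneg hx)
  rw [Psi_eq, abs_of_nonneg (by linarith [hx.1])]
  linarith [hx.2]

def invIntegers : Set ℝ := range fun n : ℤ => (n : ℝ)⁻¹

lemma zero_mem_invIntegers : (0 : ℝ) ∈ invIntegers := ⟨0, by simp⟩

lemma ne_zero_of_notMem_invIntegers {y : ℝ} (hy : y ∉ invIntegers) : y ≠ 0 :=
  fun h => hy (h ▸ zero_mem_invIntegers)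

lemma fract_one_div_eq_Imap_div {x : ℝ} (hx : x ≠ 0) :
    Int.fract (1 / x) = Imap x / (1 - Imap x) := by
  have := Int.fract_nonneg (1 / x)
  rw [Imap, if_neg hx]
  field_simp
  ring

lemma countable_Imap_fiber (c : ℝ) : (Imap ⁻¹' {c}).Countable := by
  -- `x = 1 / (⌊1/x⌋ + {1/x})`, and `{1/x}` is recovered from `I x`
  refine ((countable_range fun n : ℤ => ((n : ℝ) + c / (1 - c))⁻¹).insert 0).mono ?_
  intro x hx
  rcases eq_or_ne x 0 with rfl | hx0
  · exact mem_insert _ _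
  refine mem_insert_of_mem _ ⟨⌊1 / x⌋, ?_⟩
  dsimp only
  rw [← mem_singleton_iff.1 hx, ← fract_one_div_eq_Imap_div hx0, Int.floor_add_fract,
    one_div, inv_inv]

def psiExceptional : Set ℝ := ⋃ k : ℕ, Imap^[k] ⁻¹' invIntegers

lemma psiExceptional_countable : psiExceptional.Countable := by
  refine countable_iUnion fun k => ?_
  induction k with
  | zero => exact countable_range _
  | succ k ih =>
    rw [Function.iterate_succ, preimage_comp]
    exact ih.preimage_of_countable_fibers fun c _ => countable_Imap_fiber c

lemma continuousAt_fract_one_div {y : ℝ} (hy : y ∉ invIntegers) :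
    ContinuousAt (fun z : ℝ => Int.fract (1 / z)) y := by
  have hy0 := ne_zero_of_notMem_invIntegers hy
  have hfl : 1 / y ≠ ⌊1 / y⌋ := fun h => hy ⟨⌊1 / y⌋, by dsimp only; rw [← h, one_div, inv_inv]⟩
  exact (continuousAt_fract hfl).comp (continuousAt_const.div continuousAt_id hy0)

lemma continuousAt_Imap {y : ℝ} (hy : y ∉ invIntegers) : ContinuousAt Imap y := by
  have hy0 := ne_zero_of_notMem_invIntegers hy
  have hfr := continuousAt_fract_one_div hy
  have h1f : 1 + Int.fract (1 / y) ≠ 0 := by linarith [Int.fract_nonneg (1 / y)]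
  have hc : ContinuousAt (fun z : ℝ => Int.fract (1 / z) / (1 + Int.fract (1 / z))) y :=
    hfr.div (continuousAt_const.add hfr) h1f
  refine hc.congr ?_
  filter_upwards [eventually_ne_nhds hy0] with z hz
  rw [Imap, if_neg hz]

lemma continuousAt_Tmap {y : ℝ} (hy : y ∉ invIntegers) : ContinuousAt Tmap y := by
  have hy0 := ne_zero_of_notMem_invIntegers hy
  have hc : ContinuousAt (fun z : ℝ => z * (1 + Int.fract (1 / z))) y :=
    continuousAt_id.mul (continuousAt_const.add (continuousAt_fract_one_div hy))
  refine hc.congr ?_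
  filter_upwards [eventually_ne_nhds hy0] with z hz
  rw [Tmap, if_neg hz]

lemma continuousAt_psiTerm {x : ℝ} (hx : x ∉ psiExceptional) (j : ℕ) :
    ContinuousAt (fun y => psiTerm y j) x := by
  have hgood : ∀ k : ℕ, Imap^[k] x ∉ invIntegers := fun k hk => hx (mem_iUnion.2 ⟨k, hk⟩)
  have hiter : ∀ k : ℕ, ContinuousAt (Imap^[k]) x := by
    intro k
    induction k with
    | zero => exact continuousAt_id
    | succ k ih =>
      rw [Function.iterate_succ']
      exact (continuousAt_Imap (hgood k)).comp ih
  exact (tendsto_finsetProd _ fun i _ => (continuousAt_Tmap (hgood i)).comp (hiter i)).mul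
    (hiter (j + 1))

lemma continuousWithinAt_Psi {x : ℝ} (hx : x ∈ Icc (0 : ℝ) (1 / 2) \ psiExceptional) :
    ContinuousWithinAt Psi (Icc 0 (1 / 2)) x := by
  have hsum := continuousWithinAt_tsum hx.1
    (fun j => (continuousAt_psiTerm hx.2 j).continuousWithinAt)
    summable_geometric_two_thirds_div_three fun j y hy => by
      rw [Real.norm_eq_abs, abs_of_nonneg (psiTerm_nonneg hy j)]
      exact psiTerm_le hy j
  exact (continuousWithinAt_id.const_mul 2).add (hsum.const_mul 2)

theorem stmt_11 :
    {x ∈ Set.Icc (0 : ℝ) (1 / 2) |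
        ¬ ContinuousWithinAt Psi (Set.Icc (0 : ℝ) (1 / 2)) x}.Countable ∧
    (∃ M : ℝ, ∀ x ∈ Set.Icc (0 : ℝ) (1 / 2), |Psi x| ≤ M) ∧
    MeasureTheory.IntegrableOn Psi (Set.Icc (0 : ℝ) (1 / 2)) MeasureTheory.volume ∧
    IntervalIntegrable Psi MeasureTheory.volume 0 (1 / 2) := by
  have hint : IntegrableOn Psi (Icc 0 (1 / 2)) volume :=
    integrableOn_of_bounded_of_continuousWithinAt_off_countable measurableSet_Icc
      measure_Icc_lt_top.ne psiExceptional_countable (fun x hx => continuousWithinAt_Psi hx)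
      fun x hx => (Real.norm_eq_abs _).trans_le (abs_Psi_le_three hx)
  refine ⟨psiExceptional_countable.mono fun x hx => ?_, ⟨3, fun x hx => abs_Psi_le_three hx⟩,
    hint, (intervalIntegrable_iff_integrableOn_Icc_of_le (by norm_num)).2 hint⟩
  by_contra hxB
  exact hx.2 (continuousWithinAt_Psi ⟨hx.1, hxB⟩)
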